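/- arXiv:1209.6488 — 3 statements merged into one kernel-verified Lean document; each statement's English description precedes it below -/
import Mathlib

section
/- With V ∈ ℝ^{n×d}, Ṽ ∈ ℝ^{n×d̃} full rank, rows w^k, w̃^k, and c* > 0, define F(λ) = ∑_{k=1}^n c*_k e^{⟨λ, w̃^k⟩} w^k. Then the derivative DF(λ) is injective for all λ ∈ ℝ^{d̃} and all c* > 0 if and only if σ(im(V)^⊥) ∩ σ(im(Ṽ)) = {0}. -/
open Finset

/-- componentwise sign vector -/
noncomputable def sgn {n : ℕ} (x : Fin n → ℝ) : Fin n → ℝ := fun i => Real.sign (x i)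

/-- set of sign vectors of a set -/
noncomputable def sgnSet {n : ℕ} (A : Set (Fin n → ℝ)) : Set (Fin n → ℝ) := sgn '' A

/-- standard dot product -/
noncomputable def dotp {m : ℕ} (x y : Fin m → ℝ) : ℝ := ∑ i, x i * y i

/-- orthogonal complement of a set, as a set -/
noncomputable def perpSet {n : ℕ} (A : Set (Fin n → ℝ)) : Set (Fin n → ℝ) :=
  {y | ∀ x ∈ A, dotp x y = 0}

lemma aux_sign_mul {d z : ℝ} (hd : 0 < d) : Real.sign (d * z) = Real.sign z := by
  rcases lt_trichotomy z 0 with h | h | h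
  · rw [Real.sign_of_neg h, Real.sign_of_neg (mul_neg_of_pos_of_neg hd h)]
  · simp [h]
  · rw [Real.sign_of_pos h, Real.sign_of_pos (mul_pos hd h)]

lemma aux_mem_perp_iff {n d : ℕ} (V : Matrix (Fin n) (Fin d) ℝ) (y : Fin n → ℝ) :
    y ∈ perpSet ((LinearMap.range V.mulVecLin : Submodule ℝ (Fin n → ℝ)) : Set (Fin n → ℝ)) ↔
      ∑ k, y k • V k = 0 := by
  constructor
  · intro h
    funext j
    have h2 := h (V.mulVecLin (Pi.single j 1)) ⟨Pi.single j 1, rfl⟩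
    simp only [dotp, Matrix.mulVecLin_apply, Matrix.mulVec_single, mul_one] at h2
    simpa [Finset.sum_apply, mul_comm] using h2
  · intro h x hx
    obtain ⟨ν, rfl⟩ := hx
    have h' : ∀ j, ∑ k, y k * V k j = 0 := by
      intro j
      have := congrFun h j
      simpa [Finset.sum_apply] using this
    simp only [dotp, Matrix.mulVecLin_apply, Matrix.mulVec, dotProduct]
    have key : ∑ k, (∑ j, V k j * ν j) * y k = ∑ j, ν j * ∑ k, y k * V k j := by
      simp_rw [Finset.sum_mul, Finset.mul_sum]
      rw [Finset.sum_comm]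
      exact Finset.sum_congr rfl fun j _ => Finset.sum_congr rfl fun k _ => by ring
    rw [key]
    simp [h']

lemma aux_inj {n dt : ℕ} (Vt : Matrix (Fin n) (Fin dt) ℝ) (hVt : Vt.rank = dt) :
    Function.Injective Vt.mulVecLin := by
  rw [← LinearMap.ker_eq_bot]
  have h := LinearMap.finrank_range_add_finrank_ker Vt.mulVecLin
  rw [Module.finrank_fin_fun] at h
  rw [Matrix.rank] at hVt
  rw [hVt] at h
  have : Module.finrank ℝ (LinearMap.ker Vt.mulVecLin) = 0 := by omega
  exact Submodule.finrank_eq_zero.mp this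

lemma aux_dotp_mulVec {n dt : ℕ} (Vt : Matrix (Fin n) (Fin dt) ℝ) (μ : Fin dt → ℝ) (k : Fin n) :
    dotp μ (Vt k) = Vt.mulVecLin μ k := by
  simp [dotp, Matrix.mulVecLin_apply, Matrix.mulVec, dotProduct, mul_comm]

theorem stmt9 {n d dt : ℕ} (V : Matrix (Fin n) (Fin d) ℝ) (Vt : Matrix (Fin n) (Fin dt) ℝ)
    (hV : V.rank = d) (hVt : Vt.rank = dt) :
    (∀ cstar : Fin n → ℝ, (∀ i, 0 < cstar i) → ∀ lam : Fin dt → ℝ,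
      Function.Injective (fun lam' : Fin dt → ℝ =>
        ∑ k, (cstar k * Real.exp (dotp lam (Vt k)) * dotp lam' (Vt k)) • V k)) ↔
    sgnSet (perpSet ((LinearMap.range V.mulVecLin : Submodule ℝ (Fin n → ℝ)) : Set (Fin n → ℝ))) ∩
      sgnSet ((LinearMap.range Vt.mulVecLin : Submodule ℝ (Fin n → ℝ)) : Set (Fin n → ℝ)) = {0} := by
  constructor
  · intro hinj
    apply Set.eq_of_subset_of_subset
    · rintro s ⟨⟨x, hx, hsx⟩, z, hz, hsz⟩
      obtain ⟨μ, rfl⟩ := hz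
      set w : Fin n → ℝ := Vt.mulVecLin μ with hw
      have hsgn : ∀ k, Real.sign (x k) = Real.sign (w k) := by
        intro k
        have := congrFun (hsx.trans hsz.symm) k
        simpa [sgn] using this
      set cstar : Fin n → ℝ := fun k => if w k = 0 then 1 else x k / w k with hcdef
      have hcpos : ∀ k, 0 < cstar k := by
        intro k
        by_cases hwk : w k = 0
        · simp [hcdef, hwk]
        · have hs := hsgn k
          rcases lt_trichotomy (w k) 0 with h | h | h
          · rw [Real.sign_of_neg h] at hs
            have hxk : x k < 0 := by
              rcases lt_trichotomy (x k) 0 with h' | h' | h'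
              · exact h'
              · simp [h'] at hs
              · rw [Real.sign_of_pos h'] at hs; norm_num at hs
            simp only [hcdef, if_neg hwk]
            exact div_pos_of_neg_of_neg hxk h
          · exact absurd h hwk
          · rw [Real.sign_of_pos h] at hs
            have hxk : 0 < x k := by
              rcases lt_trichotomy (x k) 0 with h' | h' | h'
              · rw [Real.sign_of_neg h'] at hs; norm_num at hs
              · simp [h'] at hs
              · exact h'
            simp only [hcdef, if_neg hwk]
            exact div_pos hxk h
      have hcx : ∀ k, cstar k * w k = x k := by
        intro k
        by_cases hwk : w k = 0
        · have : Real.sign (x k) = 0 := by rw [hsgn k, hwk, Real.sign_zero]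
          rw [Real.sign_eq_zero_iff] at this
          simp [hcdef, hwk, this]
        · simp only [hcdef, if_neg hwk]
          exact div_mul_cancel₀ _ hwk
      have h0 : (fun lam' : Fin dt → ℝ =>
          ∑ k, (cstar k * Real.exp (dotp (0 : Fin dt → ℝ) (Vt k)) * dotp lam' (Vt k)) • V k) μ
          = (fun lam' : Fin dt → ℝ =>
          ∑ k, (cstar k * Real.exp (dotp (0 : Fin dt → ℝ) (Vt k)) * dotp lam' (Vt k)) • V k) 0 := by
        simp only
        have e1 : ∀ k : Fin n, dotp (0 : Fin dt → ℝ) (Vt k) = 0 := by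
          intro k; simp [dotp]
        have e2 : ∀ k : Fin n, dotp (0 : Fin dt → ℝ) (Vt k) = 0 := e1
        have lhs0 : ∑ k, (cstar k * Real.exp (dotp (0 : Fin dt → ℝ) (Vt k)) * dotp μ (Vt k)) • V k
            = ∑ k, x k • V k := by
          apply Finset.sum_congr rfl
          intro k _
          rw [e1 k, Real.exp_zero, mul_one, aux_dotp_mulVec, ← hw, hcx k]
        rw [lhs0, (aux_mem_perp_iff V x).mp hx]
        apply (Finset.sum_eq_zero _).symm
        intro k _
        simp [dotp]
      have := hinj cstar hcpos 0 h0
      have hw0 : w = 0 := by rw [hw, this]; simp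
      have : s = 0 := by
        rw [← hsz, hw0]
        funext k
        simp [sgn, Real.sign_zero]
      simp [this]
    · rintro s hs
      simp only [Set.mem_singleton_iff] at hs
      subst hs
      constructor
      · refine ⟨0, ?_, ?_⟩
        · intro x hx; simp [dotp]
        · funext k; simp [sgn, Real.sign_zero]
      · refine ⟨0, ⟨0, by simp⟩, ?_⟩
        funext k; simp [sgn, Real.sign_zero]
  · intro hsign cstar hcpos lam
    intro a b hab
    have hdpos : ∀ k, 0 < cstar k * Real.exp (dotp lam (Vt k)) := fun k =>
      mul_pos (hcpos k) (Real.exp_pos _)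
    set μ : Fin dt → ℝ := a - b with hμ
    have hsum : ∑ k, (cstar k * Real.exp (dotp lam (Vt k)) * dotp μ (Vt k)) • V k = 0 := by
      have expand : ∀ k : Fin n, dotp μ (Vt k) = dotp a (Vt k) - dotp b (Vt k) := by
        intro k
        simp [dotp, hμ, sub_mul, Finset.sum_sub_distrib]
      have : ∑ k, (cstar k * Real.exp (dotp lam (Vt k)) * dotp μ (Vt k)) • V k
          = ∑ k, (cstar k * Real.exp (dotp lam (Vt k)) * dotp a (Vt k)) • V k
            - ∑ k, (cstar k * Real.exp (dotp lam (Vt k)) * dotp b (Vt k)) • V k := by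
        rw [← Finset.sum_sub_distrib]
        apply Finset.sum_congr rfl
        intro k _
        rw [expand k, mul_sub, sub_smul]
      have hab' : ∑ k, (cstar k * Real.exp (dotp lam (Vt k)) * dotp a (Vt k)) • V k
          = ∑ k, (cstar k * Real.exp (dotp lam (Vt k)) * dotp b (Vt k)) • V k := hab
      rw [this, hab', sub_self]
    set y : Fin n → ℝ := fun k => cstar k * Real.exp (dotp lam (Vt k)) * Vt.mulVecLin μ k
        with hy
    have hyperp : y ∈ perpSet ((LinearMap.range V.mulVecLin :
        Submodule ℝ (Fin n → ℝ)) : Set (Fin n → ℝ)) := by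
      rw [aux_mem_perp_iff]
      rw [← hsum]
      apply Finset.sum_congr rfl
      intro k _
      rw [hy]
      simp only
      rw [aux_dotp_mulVec Vt μ k]
    have hsgn_eq : sgn y = sgn (Vt.mulVecLin μ) := by
      funext k
      simp only [sgn, hy]
      exact aux_sign_mul (hdpos k)
    have hmem : sgn (Vt.mulVecLin μ) ∈
        sgnSet (perpSet ((LinearMap.range V.mulVecLin :
          Submodule ℝ (Fin n → ℝ)) : Set (Fin n → ℝ))) ∩
        sgnSet ((LinearMap.range Vt.mulVecLin : Submodule ℝ (Fin n → ℝ)) : Set (Fin n → ℝ)) :=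
      ⟨⟨y, hyperp, hsgn_eq⟩, ⟨Vt.mulVecLin μ, ⟨μ, rfl⟩, rfl⟩⟩
    rw [hsign] at hmem
    simp only [Set.mem_singleton_iff] at hmem
    have hμ0 : Vt.mulVecLin μ = 0 := by
      funext k
      have := congrFun hmem k
      simp only [sgn, Pi.zero_apply] at this ⊢
      exact Real.sign_eq_zero_iff.mp this
    have : μ = 0 := aux_inj Vt hVt (by rw [hμ0]; simp)
    rw [hμ] at this
    exact sub_eq_zero.mp this
end

section
/- Let V, Ṽ ∈ ℝ^{n×d} be full-rank matrices (same number d of columns). Then σ(im(V)^⊥) ∩ σ(im(Ṽ)) = {0} if and only if σ(im(Ṽ)^⊥) ∩ σ(im(V)) = {0}. -/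
open Finset Matrix

lemma real_sign_mul_pos {c x : ℝ} (hc : 0 < c) : Real.sign (c * x) = Real.sign x := by
  rcases lt_trichotomy x 0 with h | h | h
  · rw [Real.sign_of_neg h, Real.sign_of_neg (by nlinarith)]
  · simp [h]
  · rw [Real.sign_of_pos h, Real.sign_of_pos (by nlinarith)]

lemma inj_of_rank {n d : ℕ} (V : Matrix (Fin n) (Fin d) ℝ) (h : V.rank = d) :
    Function.Injective V.mulVecLin := by
  rw [← LinearMap.ker_eq_bot]
  have h1 := V.mulVecLin.finrank_range_add_finrank_ker
  rw [Module.finrank_fin_fun] at h1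
  rw [Matrix.rank] at h
  have h2 : Module.finrank ℝ (LinearMap.ker V.mulVecLin) = 0 := by omega
  exact Submodule.finrank_eq_zero.mp h2

/-- `u` is orthogonal to the range of `V.mulVecLin` iff `Vᵀ u = 0`. -/
lemma mem_perp_iff {n d : ℕ} (V : Matrix (Fin n) (Fin d) ℝ) (u : Fin n → ℝ) :
    u ∈ perpSet ((LinearMap.range V.mulVecLin : Submodule ℝ (Fin n → ℝ)) : Set (Fin n → ℝ)) ↔
    Vᵀ.mulVec u = 0 := by
  constructor
  · intro hu
    funext k
    have := hu (V.mulVec (Pi.single k 1)) ⟨Pi.single k 1, rfl⟩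
    simp only [dotp, Matrix.mulVec_single, mul_one] at this
    simpa [Matrix.mulVec, dotProduct, Matrix.transpose_apply] using this
  · intro h x hx
    obtain ⟨z, hz⟩ := hx
    have hz' : V.mulVec z = x := hz
    subst hz'
    have : ∀ k, ∑ i, V i k * u i = 0 := by
      intro k
      have := congrFun h k
      simpa [Matrix.mulVec, dotProduct, Matrix.transpose_apply] using this
    have heq : dotp (V.mulVec z) u = ∑ k, z k * ∑ i, V i k * u i := by
      simp only [dotp, Matrix.mulVec, dotProduct, Finset.sum_mul, Finset.mul_sum]
      rw [Finset.sum_comm]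
      refine Finset.sum_congr rfl fun k _ => Finset.sum_congr rfl fun i _ => by ring
    rw [heq]
    simp [this]

/-- key characterization: a nonzero common sign vector of `(im V)ᗮ` and `im Vt`
exists iff some positive diagonal scaling makes `Vᵀ D Vt` singular. -/
lemma key {n d : ℕ} (V Vt : Matrix (Fin n) (Fin d) ℝ)
    (hVt : Function.Injective Vt.mulVecLin) :
    (∃ s : Fin n → ℝ, s ∈
        sgnSet (perpSet ((LinearMap.range V.mulVecLin : Submodule ℝ (Fin n → ℝ)) : Set (Fin n → ℝ))) ∩
        sgnSet ((LinearMap.range Vt.mulVecLin : Submodule ℝ (Fin n → ℝ)) : Set (Fin n → ℝ)) ∧ s ≠ 0) ↔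
    ∃ D : Fin n → ℝ, (∀ i, 0 < D i) ∧ (Vᵀ * Matrix.diagonal D * Vt).det = 0 := by
  constructor
  · rintro ⟨s, ⟨⟨u, hu, hsu⟩, ⟨w, hw, hsw⟩⟩, hs0⟩
    obtain ⟨c, hc⟩ := hw
    have hc' : Vt.mulVec c = w := hc
    have hsign : ∀ i, Real.sign (u i) = Real.sign (w i) := by
      intro i
      have h1 := congrFun hsu i
      have h2 := congrFun hsw i
      simp only [sgn] at h1 h2
      rw [h1, h2]
    refine ⟨fun i => if h : w i = 0 then 1 else u i / w i, ?_, ?_⟩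
    · intro i
      by_cases h : w i = 0
      · simp [h]
      · simp only [h, dif_neg, not_false_iff]
        rcases lt_trichotomy (w i) 0 with hw' | hw' | hw'
        · have : u i < 0 := by
            by_contra hcon
            push_neg at hcon
            have hs := hsign i
            rw [Real.sign_of_neg hw'] at hs
            rcases eq_or_lt_of_le hcon with he | hl
            · rw [← he, Real.sign_zero] at hs; norm_num at hs
            · rw [Real.sign_of_pos hl] at hs; norm_num at hs
          exact div_pos_of_neg_of_neg this hw'
        · exact absurd hw' h
        · have : 0 < u i := by
            by_contra hcon
            push_neg at hcon
            have hs := hsign i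
            rw [Real.sign_of_pos hw'] at hs
            rcases eq_or_lt_of_le hcon with he | hl
            · rw [he, Real.sign_zero] at hs; norm_num at hs
            · rw [Real.sign_of_neg hl] at hs; norm_num at hs
          exact div_pos this hw'
    · have hwne : w ≠ 0 := by
        intro h
        apply hs0
        rw [← hsw, h]
        funext i
        simp [sgn, Real.sign_zero]
      have hcne : c ≠ 0 := by
        intro h
        apply hwne
        rw [← hc', h, Matrix.mulVec_zero]
      rw [← Matrix.exists_mulVec_eq_zero_iff]
      refine ⟨c, hcne, ?_⟩
      rw [← Matrix.mulVec_mulVec, ← Matrix.mulVec_mulVec, hc']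
      have hdw : (Matrix.diagonal (fun i => if h : w i = 0 then 1 else u i / w i)).mulVec w = u := by
        funext i
        rw [Matrix.mulVec_diagonal]
        by_cases h : w i = 0
        · have hs := hsign i
          rw [h, Real.sign_zero] at hs
          simp [h, Real.sign_eq_zero_iff.mp hs]
        · simp only [h, dif_neg, not_false_iff]
          field_simp
      rw [hdw]
      exact (mem_perp_iff V u).mp hu
  · rintro ⟨D, hD, hdet⟩
    obtain ⟨c, hcne, hMc⟩ := Matrix.exists_mulVec_eq_zero_iff.mpr hdet
    set w := Vt.mulVec c with hw
    have hwne : w ≠ 0 := by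
      intro h
      exact hcne (hVt (by simpa [Matrix.mulVecLin_apply] using h))
    set u := fun i => D i * w i with hu
    have hdw : (Matrix.diagonal D).mulVec w = u := by
      funext i
      rw [Matrix.mulVec_diagonal]
    have hVu : Vᵀ.mulVec u = 0 := by
      have heq : (Vᵀ * Matrix.diagonal D * Vt).mulVec c = Vᵀ.mulVec u := by
        rw [← Matrix.mulVec_mulVec, ← Matrix.mulVec_mulVec, ← hw, hdw]
      rw [← heq]
      exact hMc
    have hsgn : sgn u = sgn w := by
      funext i
      simp only [sgn, hu]
      exact real_sign_mul_pos (hD i)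
    refine ⟨sgn w, ⟨⟨u, (mem_perp_iff V u).mpr hVu, hsgn⟩, ⟨w, ⟨c, rfl⟩, rfl⟩⟩, ?_⟩
    intro h
    apply hwne
    funext i
    have := congrFun h i
    simp only [sgn, Pi.zero_apply] at this
    exact Real.sign_eq_zero_iff.mp this

lemma zero_mem_inter {n d : ℕ} (V Vt : Matrix (Fin n) (Fin d) ℝ) :
    (0 : Fin n → ℝ) ∈
      sgnSet (perpSet ((LinearMap.range V.mulVecLin : Submodule ℝ (Fin n → ℝ)) : Set (Fin n → ℝ))) ∩
      sgnSet ((LinearMap.range Vt.mulVecLin : Submodule ℝ (Fin n → ℝ)) : Set (Fin n → ℝ)) := by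
  constructor
  · refine ⟨0, ?_, ?_⟩
    · intro x _
      simp [dotp]
    · funext i; simp [sgn, Real.sign_zero]
  · refine ⟨0, ?_, ?_⟩
    · exact Submodule.zero_mem _
    · funext i; simp [sgn, Real.sign_zero]

lemma inter_eq_singleton_iff {n : ℕ} (S : Set (Fin n → ℝ)) (h0 : (0 : Fin n → ℝ) ∈ S) :
    S = {0} ↔ ¬ ∃ s : Fin n → ℝ, s ∈ S ∧ s ≠ 0 := by
  constructor
  · rintro h ⟨s, hs, hne⟩
    rw [h] at hs
    exact hne hs
  · intro h
    ext x
    simp only [Set.mem_singleton_iff]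
    constructor
    · intro hx
      by_contra hne
      exact h ⟨x, hx, hne⟩
    · intro hx; rw [hx]; exact h0

theorem stmt10 {n d : ℕ} (V Vt : Matrix (Fin n) (Fin d) ℝ)
    (hV : V.rank = d) (hVt : Vt.rank = d) :
    (sgnSet (perpSet ((LinearMap.range V.mulVecLin : Submodule ℝ (Fin n → ℝ)) : Set (Fin n → ℝ))) ∩
       sgnSet ((LinearMap.range Vt.mulVecLin : Submodule ℝ (Fin n → ℝ)) : Set (Fin n → ℝ)) = {0}) ↔
    (sgnSet (perpSet ((LinearMap.range Vt.mulVecLin : Submodule ℝ (Fin n → ℝ)) : Set (Fin n → ℝ))) ∩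
       sgnSet ((LinearMap.range V.mulVecLin : Submodule ℝ (Fin n → ℝ)) : Set (Fin n → ℝ)) = {0}) := by
  rw [inter_eq_singleton_iff _ (zero_mem_inter V Vt),
      inter_eq_singleton_iff _ (zero_mem_inter Vt V)]
  rw [not_iff_not]
  rw [key V Vt (inj_of_rank Vt hVt), key Vt V (inj_of_rank V hV)]
  constructor <;> rintro ⟨D, hD, hdet⟩ <;> refine ⟨D, hD, ?_⟩ <;>
  · rw [← Matrix.det_transpose]
    simpa [Matrix.transpose_mul, Matrix.diagonal_transpose, Matrix.mul_assoc] using hdet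
end

section
/- Let V, Ṽ ∈ ℝ^{n×d} be full-rank matrices with rows w^k and w̃^k, c* > 0, and F(λ) = ∑_k c*_k e^{⟨λ, w̃^k⟩} w^k. If σ(im(V)) = σ(im(Ṽ)) and the all-plus sign vector (+,…,+) belongs to σ(im(V)), then F is a real analytic isomorphism of ℝ^d onto C° = { ∑_k c'_k w^k : c' > 0 }, for every c* > 0. -/
open Finset

/-!
Write `F = Vᵀ ∘ (c* ⊙ exp) ∘ Ṽ`. The sign hypothesis enters through a single observation: if
`uᵀ V = 0` and `u` has the sign vector of some `Ṽ h`, then `u = 0` (and hence `Ṽ h = 0`), because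
pairing `u` with a vector `V μ` of the same sign pattern gives a vanishing sum of nonnegative terms.
For `u = c* ⊙ (e^{Ṽλ} - e^{Ṽμ})` this is injectivity of `F`; for `u = c* ⊙ e^{Ṽλ} ⊙ Ṽ h` it says
that the Jacobian of `F` is invertible, so the range of `F` is open. The range is also closed in
the convex set `C°`: if `F λ_j → x = Vᵀ c'` with `|λ_j| → ∞` in the direction `ν`, choose `μ` with
`sgn (V μ) = sgn (Ṽ ν)`; then `⟨F λ_j - x, μ⟩ = ∑ₖ (c*ₖ e^{⟨λ_j, w̃ᵏ⟩} - c'ₖ) (V μ)ₖ` is eventually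
bounded below by `∑ₖ c'ₖ |(V μ)ₖ| / 2 > 0`, although it tends to `0`. By connectedness the range
of `F` is all of `C°`.
-/

open Filter Topology Matrix

namespace Real

lemma sign_eq_one_iff {a : ℝ} : Real.sign a = 1 ↔ 0 < a := by
  refine ⟨fun h => ?_, Real.sign_of_pos⟩
  rcases lt_trichotomy a 0 with ha | rfl | ha
  · rw [Real.sign_of_neg ha] at h; norm_num at h
  · simp at h
  · exact ha

lemma sign_eq_neg_one_iff {a : ℝ} : Real.sign a = -1 ↔ a < 0 := by
  refine ⟨fun h => ?_, Real.sign_of_neg⟩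
  rcases lt_trichotomy a 0 with ha | rfl | ha
  · exact ha
  · simp at h
  · rw [Real.sign_of_pos ha] at h; norm_num at h

lemma mul_pos_of_sign_eq {a b : ℝ} (h : Real.sign a = Real.sign b) (ha : a ≠ 0) : 0 < a * b := by
  rcases Real.sign_apply_eq_of_ne_zero a ha with ha' | ha'
  · exact mul_pos_of_neg_of_neg (sign_eq_neg_one_iff.1 ha') (sign_eq_neg_one_iff.1 (h ▸ ha'))
  · exact mul_pos (sign_eq_one_iff.1 ha') (sign_eq_one_iff.1 (h ▸ ha'))

lemma sign_mul_of_pos {a b : ℝ} (ha : 0 < a) : Real.sign (a * b) = Real.sign b := by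
  rcases lt_trichotomy b 0 with hb | rfl | hb
  · rw [Real.sign_of_neg hb, Real.sign_of_neg (mul_neg_of_pos_of_neg ha hb)]
  · simp
  · rw [Real.sign_of_pos hb, Real.sign_of_pos (mul_pos ha hb)]

lemma sign_mul_exp_sub_mul_exp {c a b : ℝ} (hc : 0 < c) :
    Real.sign (c * Real.exp a - c * Real.exp b) = Real.sign (a - b) := by
  rw [← mul_sub, sign_mul_of_pos hc]
  rcases lt_trichotomy a b with hab | rfl | hab
  · rw [Real.sign_of_neg (sub_neg.2 (Real.exp_lt_exp.2 hab)), Real.sign_of_neg (sub_neg.2 hab)]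
  · simp
  · rw [Real.sign_of_pos (sub_pos.2 (Real.exp_lt_exp.2 hab)), Real.sign_of_pos (sub_pos.2 hab)]

end Real

lemma eventually_le_mul_exp_sub_mul {α : Type*} {l : Filter α} {r s : α → ℝ} {a b t w : ℝ}
    (ha : 0 < a) (hb : 0 < b) (hw : Real.sign w = Real.sign t) (hr : Tendsto r l atTop)
    (hs : Tendsto s l (𝓝 t)) :
    ∀ᶠ j in l, b * |w| / 2 ≤ (a * Real.exp (r j * s j) - b) * w := by
  rcases lt_trichotomy t 0 with ht | rfl | ht
  · have hw' : w < 0 := Real.sign_eq_neg_one_iff.1 (hw.trans (Real.sign_of_neg ht))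
    have hlim : Tendsto (fun j => a * Real.exp (r j * s j)) l (𝓝 (a * 0)) :=
      (Real.tendsto_exp_atBot.comp (hr.atTop_mul_neg ht hs)).const_mul a
    rw [mul_zero] at hlim
    filter_upwards [(tendsto_order.1 hlim).2 (b / 2) (by positivity)] with j hj
    rw [abs_of_neg hw']
    nlinarith
  · rw [Real.sign_zero, Real.sign_eq_zero_iff] at hw
    simp [hw]
  · have hw' : 0 < w := Real.sign_eq_one_iff.1 (hw.trans (Real.sign_of_pos ht))
    have hlim : Tendsto (fun j => a * Real.exp (r j * s j)) l atTop :=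
      (Real.tendsto_exp_atTop.comp (hr.atTop_mul_pos ht hs)).const_mul_atTop ha
    filter_upwards [hlim.eventually_ge_atTop (3 * b / 2)] with j hj
    rw [abs_of_pos hw']
    nlinarith

section SignVectors

variable {n : ℕ}

lemma sgn_eq_zero_iff {y : Fin n → ℝ} : sgn y = 0 ↔ y = 0 := by
  simp [sgn, funext_iff, Real.sign_eq_zero_iff]

lemma sgn_mul_of_pos {a y : Fin n → ℝ} (ha : ∀ k, 0 < a k) :
    sgn (fun k => a k * y k) = sgn y :=
  funext fun k => Real.sign_mul_of_pos (ha k)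

lemma eq_zero_of_sgn_eq_of_dotp_eq_zero {u z : Fin n → ℝ} (hs : sgn u = sgn z)
    (h : dotp u z = 0) : u = 0 := by
  have hpos : ∀ k, u k ≠ 0 → 0 < u k * z k := fun k => Real.mul_pos_of_sign_eq (congrFun hs k)
  have hnonneg : ∀ k ∈ univ, 0 ≤ u k * z k := fun k _ => by
    by_cases hk : u k = 0
    · simp [hk]
    · exact (hpos k hk).le
  have hzero := (sum_eq_zero_iff_of_nonneg hnonneg).1 h
  funext k
  by_contra hk
  exact (hpos k hk).ne' (hzero k (mem_univ k))

lemma eq_zero_of_sgn_eq_of_vecMul_eq_zero {d : ℕ} {V Vt : Matrix (Fin n) (Fin d) ℝ}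
    (hsgn : sgnSet (LinearMap.range Vt.mulVecLin : Set (Fin n → ℝ)) ⊆
      sgnSet (LinearMap.range V.mulVecLin : Set (Fin n → ℝ)))
    {u y : Fin n → ℝ} (hy : y ∈ LinearMap.range Vt.mulVecLin) (hu : u ᵥ* V = 0)
    (hs : sgn u = sgn y) : y = 0 := by
  obtain ⟨_, ⟨x, rfl⟩, hx⟩ := hsgn ⟨y, hy, rfl⟩
  have hu0 : u = 0 := by
    refine eq_zero_of_sgn_eq_of_dotp_eq_zero (hs.trans hx.symm) ?_
    change u ⬝ᵥ V *ᵥ x = 0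
    rw [dotProduct_mulVec, hu, zero_dotProduct]
  rwa [hu0, sgn_eq_zero_iff.2 rfl, eq_comm, sgn_eq_zero_iff] at hs

end SignVectors

lemma Matrix.mulVecLin_injective_of_rank_eq {K m : Type*} [Field K] [Fintype m] {d : ℕ}
    (A : Matrix m (Fin d) K) (hA : A.rank = d) : Function.Injective A.mulVecLin := by
  rw [← LinearMap.ker_eq_bot, ← Submodule.finrank_eq_zero]
  have := LinearMap.finrank_range_add_finrank_ker A.mulVecLin
  rw [Module.finrank_fin_fun, ← Matrix.rank, hA] at this
  omega

section Birch

variable {n d : ℕ} (V Vt : Matrix (Fin n) (Fin d) ℝ) (c : Fin n → ℝ)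

def posCone : Set (Fin d → ℝ) :=
  {x | ∃ c' : Fin n → ℝ, (∀ i, 0 < c' i) ∧ x = ∑ k, c' k • V k}

noncomputable def birchMap (lam : Fin d → ℝ) : Fin d → ℝ :=
  ∑ k, (c k * Real.exp (dotp lam (Vt k))) • V k

noncomputable def birchCoeff (lam : Fin d → ℝ) : Fin n → ℝ :=
  fun k => c k * Real.exp ((Vt *ᵥ lam) k)

lemma convex_posCone : Convex ℝ (posCone V) := by
  have : posCone V = V.vecMulLinear '' Set.univ.pi fun _ => Set.Ioi 0 := by
    ext x
    simp [posCone, vecMul_eq_sum, eq_comm]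
  rw [this]
  exact (convex_pi fun _ _ => convex_Ioi 0).linear_image _

lemma birchMap_eq_vecMul (lam : Fin d → ℝ) :
    birchMap V Vt c lam = birchCoeff Vt c lam ᵥ* V := by
  simp only [birchMap, birchCoeff, vecMul_eq_sum, dotp, mulVec, dotProduct, mul_comm]

lemma birchCoeff_pos (hc : ∀ k, 0 < c k) (lam : Fin d → ℝ) (k : Fin n) :
    0 < birchCoeff Vt c lam k :=
  mul_pos (hc k) (Real.exp_pos _)

lemma analyticOn_birchMap : AnalyticOn ℝ (birchMap V Vt c) Set.univ :=
  Finset.analyticOn_fun_sum _ fun _ _ => (analyticOn_const.mul (Finset.analyticOn_fun_sum _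
    fun i _ => ((ContinuousLinearMap.proj (R := ℝ) (φ := fun _ : Fin d => ℝ) i).analyticOn
      _).mul analyticOn_const).rexp).smul analyticOn_const

lemma continuous_birchMap : Continuous (birchMap V Vt c) := by
  unfold birchMap dotp
  fun_prop

lemma exists_hasStrictFDerivAt_birchMap (lam : Fin d → ℝ) :
    ∃ L : (Fin d → ℝ) →L[ℝ] (Fin d → ℝ), HasStrictFDerivAt (birchMap V Vt c) L lam ∧
      ∀ h, L h = (fun k => birchCoeff Vt c lam k * (Vt *ᵥ h) k) ᵥ* V := by
  let T : (Fin d → ℝ) →L[ℝ] (Fin n → ℝ) := LinearMap.toContinuousLinearMap Vt.mulVecLin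
  let S : (Fin n → ℝ) →L[ℝ] (Fin d → ℝ) := LinearMap.toContinuousLinearMap V.vecMulLinear
  let D : (Fin n → ℝ) →L[ℝ] (Fin n → ℝ) :=
    ContinuousLinearMap.pi fun k => birchCoeff Vt c lam k • ContinuousLinearMap.proj k
  refine ⟨S.comp (D.comp T), ?_, fun h => rfl⟩
  have hE : HasStrictFDerivAt (fun (y : Fin n → ℝ) k => c k * Real.exp (y k)) D (T lam) := by
    refine hasStrictFDerivAt_pi.2 fun k => ?_
    have := ((Real.hasStrictDerivAt_exp _).comp_hasStrictFDerivAt (T lam)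
      (hasStrictFDerivAt_apply (𝕜 := ℝ) k (T lam))).const_mul (c k)
    rwa [smul_smul] at this
  have hF : birchMap V Vt c = S ∘ (fun (y : Fin n → ℝ) k => c k * Real.exp (y k)) ∘ T :=
    funext (birchMap_eq_vecMul V Vt c)
  rw [hF]
  exact S.hasStrictFDerivAt.comp lam (hE.comp lam T.hasStrictFDerivAt)

variable {V Vt c}

lemma birchMap_injective (hVt : Function.Injective Vt.mulVecLin)
    (hsgn : sgnSet (LinearMap.range Vt.mulVecLin : Set (Fin n → ℝ)) ⊆
      sgnSet (LinearMap.range V.mulVecLin : Set (Fin n → ℝ)))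
    (hc : ∀ k, 0 < c k) : Function.Injective (birchMap V Vt c) := by
  intro lam mu h
  rw [birchMap_eq_vecMul, birchMap_eq_vecMul] at h
  have hsub : Vt *ᵥ (lam - mu) = 0 := by
    refine eq_zero_of_sgn_eq_of_vecMul_eq_zero (u := birchCoeff Vt c lam - birchCoeff Vt c mu)
      hsgn (LinearMap.mem_range_self _ _) (by rw [sub_vecMul, h, sub_self]) (funext fun k => ?_)
    simp only [sgn, birchCoeff, Pi.sub_apply, mulVec_sub]
    exact Real.sign_mul_exp_sub_mul_exp (hc k)
  exact sub_eq_zero.1 ((injective_iff_map_eq_zero _).1 hVt _ hsub)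

lemma isOpen_range_birchMap (hVt : Function.Injective Vt.mulVecLin)
    (hsgn : sgnSet (LinearMap.range Vt.mulVecLin : Set (Fin n → ℝ)) ⊆
      sgnSet (LinearMap.range V.mulVecLin : Set (Fin n → ℝ)))
    (hc : ∀ k, 0 < c k) : IsOpen (Set.range (birchMap V Vt c)) := by
  refine isOpen_iff_mem_nhds.2 ?_
  rintro _ ⟨lam, rfl⟩
  obtain ⟨L, hL, hLapply⟩ := exists_hasStrictFDerivAt_birchMap V Vt c lam
  have hLinj : Function.Injective L := by
    refine (injective_iff_map_eq_zero L).2 fun h hh => ?_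
    have hVth : Vt *ᵥ h = 0 := eq_zero_of_sgn_eq_of_vecMul_eq_zero hsgn
      (LinearMap.mem_range_self _ h) (hLapply h ▸ hh)
      (sgn_mul_of_pos (birchCoeff_pos Vt c hc lam))
    exact (injective_iff_map_eq_zero _).1 hVt h hVth
  have hLsurj : LinearMap.range (L : (Fin d → ℝ) →ₗ[ℝ] (Fin d → ℝ)) = ⊤ :=
    LinearMap.range_eq_top.2 (LinearMap.injective_iff_surjective.1 hLinj)
  rw [← hL.map_nhds_eq_of_surj hLsurj]
  exact range_mem_map

lemma not_tendsto_birchMap_smul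
    (hsgn : sgnSet (LinearMap.range Vt.mulVecLin : Set (Fin n → ℝ)) ⊆
      sgnSet (LinearMap.range V.mulVecLin : Set (Fin n → ℝ)))
    (hc : ∀ k, 0 < c k) {α : Type*} {l : Filter α} [l.NeBot] {r : α → ℝ}
    {ν : α → Fin d → ℝ} {ν₀ : Fin d → ℝ} (hr : Tendsto r l atTop) (hν : Tendsto ν l (𝓝 ν₀))
    (hν₀ : Vt *ᵥ ν₀ ≠ 0) {x : Fin d → ℝ} (hx : x ∈ posCone V) :
    ¬ Tendsto (fun j => birchMap V Vt c (r j • ν j)) l (𝓝 x) := by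
  intro hlim
  obtain ⟨c', hc', rfl⟩ := hx
  obtain ⟨_, ⟨μ, rfl⟩, hw⟩ := hsgn ⟨_, LinearMap.mem_range_self _ ν₀, rfl⟩
  set w := V *ᵥ μ
  have hpair : ∀ j, dotp (birchMap V Vt c (r j • ν j) - ∑ k, c' k • V k) μ =
      ∑ k, (c k * Real.exp (r j * (Vt *ᵥ ν j) k) - c' k) * w k := fun j => by
    rw [birchMap_eq_vecMul, ← vecMul_eq_sum, ← sub_vecMul]
    change _ ⬝ᵥ _ = _
    rw [← dotProduct_mulVec]
    simp [dotProduct, birchCoeff, mulVec_smul, w]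
  have hpair_lim : Tendsto (fun j => dotp (birchMap V Vt c (r j • ν j) - ∑ k, c' k • V k) μ)
      l (𝓝 0) := by
    have hcont : Continuous fun v : Fin d → ℝ => dotp v μ := by unfold dotp; fun_prop
    have := (hcont.tendsto _).comp (hlim.sub_const (∑ k, c' k • V k))
    rwa [sub_self, show dotp 0 μ = 0 by simp [dotp]] at this
  have hbound : ∀ᶠ j in l, ∑ k, c' k * |w k| / 2 ≤
      ∑ k, (c k * Real.exp (r j * (Vt *ᵥ ν j) k) - c' k) * w k := by
    refine (eventually_all.2 fun k => eventually_le_mul_exp_sub_mul (hc k) (hc' k)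
      (congrFun hw k) hr ?_).mono fun j hj => sum_le_sum fun k _ => hj k
    exact ((continuous_apply k).comp (Vt.mulVecLin.continuous_of_finiteDimensional)).tendsto ν₀
      |>.comp hν
  have hpos : 0 < ∑ k, c' k * |w k| / 2 := by
    obtain ⟨k, hk⟩ := Function.ne_iff.1 hν₀
    have hsk : Real.sign (w k) = Real.sign ((Vt *ᵥ ν₀) k) := congrFun hw k
    have hwk : w k ≠ 0 := fun h0 =>
      hk (Real.sign_eq_zero_iff.1 (by rw [← hsk, h0, Real.sign_zero]))
    exact sum_pos' (fun i _ => div_nonneg (mul_nonneg (hc' i).le (abs_nonneg _)) zero_le_two)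
      ⟨k, mem_univ k, div_pos (mul_pos (hc' k) (abs_pos.2 hwk)) two_pos⟩
  have := ge_of_tendsto hpair_lim (hbound.mono fun j hj => (hpair j).symm ▸ hj)
  linarith

lemma mem_range_birchMap_of_mem_closure (hVt : Function.Injective Vt.mulVecLin)
    (hsgn : sgnSet (LinearMap.range Vt.mulVecLin : Set (Fin n → ℝ)) ⊆
      sgnSet (LinearMap.range V.mulVecLin : Set (Fin n → ℝ)))
    (hc : ∀ k, 0 < c k) {x : Fin d → ℝ} (hx : x ∈ posCone V)
    (hcl : x ∈ closure (Set.range (birchMap V Vt c))) : x ∈ Set.range (birchMap V Vt c) := by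
  obtain ⟨_, hy, hyx⟩ := mem_closure_iff_seq_limit.1 hcl
  choose lam hlam using hy
  have hF : Tendsto (fun j => birchMap V Vt c (lam j)) atTop (𝓝 x) := by simpa [hlam] using hyx
  by_cases hbdd : ∃ R, ∃ᶠ j in atTop, ‖lam j‖ ≤ R
  · obtain ⟨R, hR⟩ := hbdd
    obtain ⟨φ, hφ, hφR⟩ := extraction_of_frequently_atTop hR
    obtain ⟨lam₀, -, ψ, hψ, hlim⟩ := (isCompact_closedBall (0 : Fin d → ℝ) R).tendsto_subseq
      (x := lam ∘ φ) fun j => mem_closedBall_zero_iff.2 (hφR j)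
    exact ⟨lam₀, tendsto_nhds_unique ((continuous_birchMap V Vt c).tendsto lam₀ |>.comp hlim)
      (hF.comp (hφ.comp hψ).tendsto_atTop)⟩
  · push Not at hbdd
    have hnorm : Tendsto (fun j => ‖lam j‖) atTop atTop :=
      tendsto_atTop.2 fun R => (hbdd R).mono fun _ => le_of_lt
    set ν := fun j => ‖lam j‖⁻¹ • lam j
    have hν : ∀ j, ‖lam j‖ • ν j = lam j := fun j => by
      by_cases h : lam j = 0
      · simp [h]
      · exact smul_inv_smul₀ (norm_ne_zero_iff.2 h) _
    obtain ⟨ν₀, -, ψ, hψ, hlim⟩ := (isCompact_closedBall (0 : Fin d → ℝ) 1).tendsto_subseq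
      (x := ν) fun j => by
        rw [mem_closedBall_zero_iff, norm_smul, norm_inv, norm_norm]
        exact inv_mul_le_one_of_le₀ le_rfl (norm_nonneg _)
    have hν₀ : ‖ν₀‖ = 1 := by
      refine tendsto_nhds_unique ((continuous_norm.tendsto ν₀).comp hlim)
        (tendsto_const_nhds.congr' ?_)
      filter_upwards [hψ.tendsto_atTop.eventually (hbdd 0)] with j hj
      exact (norm_smul_inv_norm (norm_pos_iff.1 hj)).symm
    have hVtν₀ : Vt *ᵥ ν₀ ≠ 0 := fun h => by
      simp [(injective_iff_map_eq_zero _).1 hVt ν₀ h] at hν₀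
    refine absurd ?_ (not_tendsto_birchMap_smul hsgn hc (hnorm.comp hψ.tendsto_atTop) hlim
      hVtν₀ hx)
    simpa only [Function.comp_def, hν] using hF.comp hψ.tendsto_atTop

theorem range_birchMap (hVt : Function.Injective Vt.mulVecLin)
    (hsgn : sgnSet (LinearMap.range Vt.mulVecLin : Set (Fin n → ℝ)) ⊆
      sgnSet (LinearMap.range V.mulVecLin : Set (Fin n → ℝ)))
    (hc : ∀ k, 0 < c k) : Set.range (birchMap V Vt c) = posCone V := by
  have hsub : Set.range (birchMap V Vt c) ⊆ posCone V := by
    rintro _ ⟨lam, rfl⟩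
    exact ⟨_, fun k => mul_pos (hc k) (Real.exp_pos _), rfl⟩
  refine hsub.antisymm <| (convex_posCone V).isPreconnected.subset_of_closure_inter_subset
    (isOpen_range_birchMap hVt hsgn hc) ⟨_, hsub (Set.mem_range_self 0), Set.mem_range_self 0⟩
    fun x ⟨hcl, hx⟩ => mem_range_birchMap_of_mem_closure hVt hsgn hc hx hcl

end Birch

theorem stmt12_general {n d : ℕ} (V Vt : Matrix (Fin n) (Fin d) ℝ)
    (hVt : Vt.rank = d)
    (hsgn : sgnSet ((LinearMap.range V.mulVecLin : Submodule ℝ (Fin n → ℝ)) : Set (Fin n → ℝ)) =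
            sgnSet ((LinearMap.range Vt.mulVecLin : Submodule ℝ (Fin n → ℝ)) : Set (Fin n → ℝ)))
    (cstar : Fin n → ℝ) (hc : ∀ i, 0 < cstar i) :
    Function.Injective (fun lam : Fin d → ℝ =>
        ∑ k, (cstar k * Real.exp (dotp lam (Vt k))) • V k) ∧
    Set.range (fun lam : Fin d → ℝ =>
        ∑ k, (cstar k * Real.exp (dotp lam (Vt k))) • V k) =
      {x : Fin d → ℝ | ∃ c' : Fin n → ℝ, (∀ i, 0 < c' i) ∧ x = ∑ k, c' k • V k} ∧
    AnalyticOn ℝ (fun lam : Fin d → ℝ =>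
        ∑ k, (cstar k * Real.exp (dotp lam (Vt k))) • V k) Set.univ := by
  have hVt_inj := Vt.mulVecLin_injective_of_rank_eq hVt
  exact ⟨birchMap_injective hVt_inj hsgn.ge hc, range_birchMap hVt_inj hsgn.ge hc,
    analyticOn_birchMap V Vt cstar⟩

theorem stmt12 {n d : ℕ} (V Vt : Matrix (Fin n) (Fin d) ℝ)
    (hV : V.rank = d) (hVt : Vt.rank = d)
    (hsgn : sgnSet ((LinearMap.range V.mulVecLin : Submodule ℝ (Fin n → ℝ)) : Set (Fin n → ℝ)) =
            sgnSet ((LinearMap.range Vt.mulVecLin : Submodule ℝ (Fin n → ℝ)) : Set (Fin n → ℝ)))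
    (hplus : (fun _ => (1 : ℝ)) ∈
      sgnSet ((LinearMap.range V.mulVecLin : Submodule ℝ (Fin n → ℝ)) : Set (Fin n → ℝ)))
    (cstar : Fin n → ℝ) (hc : ∀ i, 0 < cstar i) :
    Function.Injective (fun lam : Fin d → ℝ =>
        ∑ k, (cstar k * Real.exp (dotp lam (Vt k))) • V k) ∧
    Set.range (fun lam : Fin d → ℝ =>
        ∑ k, (cstar k * Real.exp (dotp lam (Vt k))) • V k) =
      {x : Fin d → ℝ | ∃ c' : Fin n → ℝ, (∀ i, 0 < c' i) ∧ x = ∑ k, c' k • V k} ∧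
    AnalyticOn ℝ (fun lam : Fin d → ℝ =>
        ∑ k, (cstar k * Real.exp (dotp lam (Vt k))) • V k) Set.univ :=
  stmt12_general V Vt hVt hsgn cstar hc
end
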